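/- Let (λ, φ_λ) be a left coaction of a quasi-Hopf algebra G on an algebra M, write λ(m) = m₍₋₁₎ ⊗ m₍₀₎, and define p_λ := φ_λ² S⁻¹(φ_λ¹ β) ⊗ φ_λ³ ∈ G ⊗ M and q_λ := S(φ̄_λ¹)α φ̄_λ² ⊗ φ̄_λ³ ∈ G ⊗ M, where φ_λ = φ_λ¹ ⊗ φ_λ² ⊗ φ_λ³ and φ_λ⁻¹ = φ̄_λ¹ ⊗ φ̄_λ² ⊗ φ̄_λ³. Then for all m ∈ M: λ(m₍₀₎)·p_λ·(S⁻¹(m₍₋₁₎) ⊗ 1_M) = p_λ·(1_G ⊗ m), and (S(m₍₋₁₎) ⊗ 1_M)·q_λ·λ(m₍₀₎) = (1_G ⊗ m)·q_λ. -/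

import Mathlib

/-! `p_λ` and `q_λ` are the images of `φ_λ` and `φ_λ⁻¹` under the contractions
`a ⊗ b ⊗ c ↦ b S⁻¹(aβ) ⊗ c` and `a ⊗ b ⊗ c ↦ S(a)αb ⊗ c`. Wrapping a contracted element in
`λ(m₍₀₎)` and `S^{±1}(m₍₋₁₎)` is the same as multiplying the uncontracted element by
`(id ⊗ λ)(λ(m))` before contracting. The intertwining relation moves this factor past `φ_λ`
(resp. `φ_λ⁻¹`), where it becomes `(Δ ⊗ id)(λ(m))`; the contraction turns its first two legs
into `ε(m₍₋₁₎)` by the antipode axioms, leaving `ε(m₍₋₁₎)m₍₀₎ = m`. -/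

open TensorProduct

set_option maxHeartbeats 1000000

noncomputable section

/-- A quasi-bialgebra structure (Drinfeld) on an algebra `G` over `ℂ`: algebra maps
`Δ : G → G ⊗ G` and `ε : G → ℂ`, together with an invertible reassociator
`φ ∈ G ⊗ G ⊗ G` satisfying quasi-coassociativity, the pentagon identity and the counit
axioms. -/
structure QuasiBialg (G : Type*) [Ring G] [Algebra ℂ G] where
  comul : G →ₐ[ℂ] G ⊗[ℂ] G
  counit : G →ₐ[ℂ] ℂ
  assocEl : G ⊗[ℂ] (G ⊗[ℂ] G)
  assocElInv : G ⊗[ℂ] (G ⊗[ℂ] G)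
  assocEl_mul_inv : assocEl * assocElInv = 1
  assocEl_inv_mul : assocElInv * assocEl = 1
  quasiCoassoc : ∀ a : G,
    TensorProduct.map LinearMap.id comul.toLinearMap (comul a) * assocEl =
      assocEl *
        (TensorProduct.assoc ℂ G G G)
          (TensorProduct.map comul.toLinearMap LinearMap.id (comul a))
  counit_comul_left : ∀ a : G,
    (TensorProduct.lid ℂ G)
      (TensorProduct.map counit.toLinearMap LinearMap.id (comul a)) = a
  counit_comul_right : ∀ a : G,
    (TensorProduct.rid ℂ G)
      (TensorProduct.map LinearMap.id counit.toLinearMap (comul a)) = a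
  counit_assocEl :
    TensorProduct.map LinearMap.id
        ((TensorProduct.lid ℂ G).toLinearMap ∘ₗ
          TensorProduct.map counit.toLinearMap LinearMap.id) assocEl =
      (1 : G ⊗[ℂ] G)
  pentagon :
    TensorProduct.map LinearMap.id
          (TensorProduct.map LinearMap.id comul.toLinearMap) assocEl *
        (TensorProduct.assoc ℂ G G (G ⊗[ℂ] G))
          (TensorProduct.map comul.toLinearMap LinearMap.id assocEl) =
      ((1 : G) ⊗ₜ[ℂ] assocEl) *
        TensorProduct.map LinearMap.id (TensorProduct.assoc ℂ G G G).toLinearMap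
          (TensorProduct.map LinearMap.id
            (TensorProduct.map comul.toLinearMap LinearMap.id) assocEl) *
        TensorProduct.map LinearMap.id (TensorProduct.assoc ℂ G G G).toLinearMap
          ((TensorProduct.assoc ℂ G (G ⊗[ℂ] G) G) (assocEl ⊗ₜ[ℂ] (1 : G)))

/-- A quasi-Hopf algebra structure (Drinfeld) on an algebra `G` over `ℂ`: a quasi-bialgebra
together with an invertible algebra antimorphism `S` and elements `α, β ∈ G` satisfying the
antipode axioms. -/
structure QuasiHopf (G : Type*) [Ring G] [Algebra ℂ G] extends QuasiBialg G where
  S : G →ₗ[ℂ] G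
  S_one : S 1 = 1
  S_mul : ∀ a b : G, S (a * b) = S b * S a
  Sinv : G →ₗ[ℂ] G
  Sinv_S : ∀ a : G, Sinv (S a) = a
  S_Sinv : ∀ a : G, S (Sinv a) = a
  alphaEl : G
  betaEl : G
  antipode_left : ∀ a : G,
    LinearMap.mul' ℂ G
        (TensorProduct.map (LinearMap.mulRight ℂ alphaEl ∘ₗ S) LinearMap.id (comul a)) =
      counit a • alphaEl
  antipode_right : ∀ a : G,
    LinearMap.mul' ℂ G
        (TensorProduct.map (LinearMap.mulRight ℂ betaEl) S (comul a)) =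
      counit a • betaEl
  antipode_assocEl :
    (LinearMap.mul' ℂ G ∘ₗ
        TensorProduct.map (LinearMap.mulRight ℂ betaEl)
          (LinearMap.mul' ℂ G ∘ₗ
            TensorProduct.map (LinearMap.mulRight ℂ alphaEl ∘ₗ S) LinearMap.id))
      assocEl = 1
  antipode_assocElInv :
    (LinearMap.mul' ℂ G ∘ₗ
        TensorProduct.map (LinearMap.mulRight ℂ alphaEl ∘ₗ S)
          (LinearMap.mul' ℂ G ∘ₗ
            TensorProduct.map (LinearMap.mulRight ℂ betaEl) S))
      assocElInv = 1

/-- A left coaction `(λ, φ_λ)` of a quasi-bialgebra `Q` on an algebra `M`: an algebra map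
`λ : M → G ⊗ M` with invertible reassociator `φ_λ ∈ G ⊗ G ⊗ M` satisfying the intertwining
relation, the mixed pentagon identity and the counit axioms. -/
structure LeftQCoaction (G M : Type*) [Ring G] [Algebra ℂ G] [Ring M] [Algebra ℂ M]
    (Q : QuasiBialg G) where
  lam : M →ₐ[ℂ] G ⊗[ℂ] M
  phiL : G ⊗[ℂ] (G ⊗[ℂ] M)
  phiLInv : G ⊗[ℂ] (G ⊗[ℂ] M)
  phiL_mul_inv : phiL * phiLInv = 1
  phiL_inv_mul : phiLInv * phiL = 1
  intertwine : ∀ m : M,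
    TensorProduct.map LinearMap.id lam.toLinearMap (lam m) * phiL =
      phiL *
        (TensorProduct.assoc ℂ G G M)
          (TensorProduct.map Q.comul.toLinearMap LinearMap.id (lam m))
  pentagon :
    ((1 : G) ⊗ₜ[ℂ] phiL) *
        TensorProduct.map LinearMap.id (TensorProduct.assoc ℂ G G M).toLinearMap
          (TensorProduct.map LinearMap.id
            (TensorProduct.map Q.comul.toLinearMap LinearMap.id) phiL) *
        TensorProduct.map LinearMap.id (TensorProduct.assoc ℂ G G M).toLinearMap
          ((TensorProduct.assoc ℂ G (G ⊗[ℂ] G) M) (Q.assocEl ⊗ₜ[ℂ] (1 : M))) =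
      TensorProduct.map LinearMap.id
          (TensorProduct.map LinearMap.id lam.toLinearMap) phiL *
        (TensorProduct.assoc ℂ G G (G ⊗[ℂ] M))
          (TensorProduct.map Q.comul.toLinearMap LinearMap.id phiL)
  counit_lam : ∀ m : M,
    (TensorProduct.lid ℂ M)
      (TensorProduct.map Q.counit.toLinearMap LinearMap.id (lam m)) = m
  counit_phiL_mid :
    TensorProduct.map LinearMap.id
        ((TensorProduct.lid ℂ M).toLinearMap ∘ₗ
          TensorProduct.map Q.counit.toLinearMap LinearMap.id) phiL =
      (1 : G ⊗[ℂ] M)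
  counit_phiL_left :
    (TensorProduct.lid ℂ (G ⊗[ℂ] M))
        (TensorProduct.map Q.counit.toLinearMap LinearMap.id phiL) =
      (1 : G ⊗[ℂ] M)

variable {G M : Type*} [Ring G] [Algebra ℂ G] [Ring M] [Algebra ℂ M]

/-- The element `p_λ = φ_λ² S⁻¹(φ_λ¹ β) ⊗ φ_λ³ ∈ G ⊗ M`. -/
def pLam (Q : QuasiHopf G) (L : LeftQCoaction G M Q.toQuasiBialg) : G ⊗[ℂ] M :=
  TensorProduct.map
    (LinearMap.mul' ℂ G ∘ₗ
      TensorProduct.map LinearMap.id (Q.Sinv ∘ₗ LinearMap.mulRight ℂ Q.betaEl) ∘ₗ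
      (TensorProduct.comm ℂ G G).toLinearMap)
    LinearMap.id ((TensorProduct.assoc ℂ G G M).symm L.phiL)

/-- The element `q_λ = S(φ̄_λ¹) α φ̄_λ² ⊗ φ̄_λ³ ∈ G ⊗ M`. -/
def qLam (Q : QuasiHopf G) (L : LeftQCoaction G M Q.toQuasiBialg) : G ⊗[ℂ] M :=
  TensorProduct.map
    (LinearMap.mul' ℂ G ∘ₗ
      TensorProduct.map (LinearMap.mulRight ℂ Q.alphaEl ∘ₗ Q.S) LinearMap.id)
    LinearMap.id ((TensorProduct.assoc ℂ G G M).symm L.phiLInv)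

/-- For `x ⊗ n ∈ G ⊗ M`, the element `λ(n)·t·(S⁻¹(x) ⊗ 1_M) ∈ G ⊗ M` (summation extended
bilinearly); used to express `λ(m₍₀₎)·p_λ·(S⁻¹(m₍₋₁₎) ⊗ 1_M)`. -/
def thetaP (Q : QuasiHopf G) (L : LeftQCoaction G M Q.toQuasiBialg) (t : G ⊗[ℂ] M) :
    G ⊗[ℂ] M →ₗ[ℂ] G ⊗[ℂ] M :=
  TensorProduct.lift (LinearMap.mul ℂ (G ⊗[ℂ] M) ∘ₗ LinearMap.mulRight ℂ t) ∘ₗ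
    TensorProduct.map L.lam.toLinearMap
      ((TensorProduct.mk ℂ G M).flip (1 : M) ∘ₗ Q.Sinv) ∘ₗ
    (TensorProduct.comm ℂ G M).toLinearMap

/-- For `x ⊗ n ∈ G ⊗ M`, the element `(S(x) ⊗ 1_M)·t·λ(n) ∈ G ⊗ M` (summation extended
bilinearly); used to express `(S(m₍₋₁₎) ⊗ 1_M)·q_λ·λ(m₍₀₎)`. -/
def thetaQ (Q : QuasiHopf G) (L : LeftQCoaction G M Q.toQuasiBialg) (t : G ⊗[ℂ] M) :
    G ⊗[ℂ] M →ₗ[ℂ] G ⊗[ℂ] M :=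
  TensorProduct.lift (LinearMap.mul ℂ (G ⊗[ℂ] M) ∘ₗ LinearMap.mulRight ℂ t) ∘ₗ
    TensorProduct.map ((TensorProduct.mk ℂ G M).flip (1 : M) ∘ₗ Q.S) L.lam.toLinearMap

namespace QuasiHopf

variable (Q : QuasiHopf G)

theorem Sinv_mul (a b : G) : Q.Sinv (a * b) = Q.Sinv b * Q.Sinv a := by
  conv_lhs => rw [← Q.S_Sinv a, ← Q.S_Sinv b, ← Q.S_mul, Q.Sinv_S]

/-- `a ⊗ b ⊗ c ↦ S(a) α b ⊗ c`, so that `q_λ` is the image of `φ_λ⁻¹`. -/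
def alphaContract : G ⊗[ℂ] (G ⊗[ℂ] M) →ₗ[ℂ] G ⊗[ℂ] M :=
  TensorProduct.map
    (LinearMap.mul' ℂ G ∘ₗ
      TensorProduct.map (LinearMap.mulRight ℂ Q.alphaEl ∘ₗ Q.S) LinearMap.id)
    LinearMap.id ∘ₗ (TensorProduct.assoc ℂ G G M).symm.toLinearMap

/-- `a ⊗ b ⊗ c ↦ b S⁻¹(a β) ⊗ c`, so that `p_λ` is the image of `φ_λ`. -/
def betaContract : G ⊗[ℂ] (G ⊗[ℂ] M) →ₗ[ℂ] G ⊗[ℂ] M :=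
  TensorProduct.map
    (LinearMap.mul' ℂ G ∘ₗ
      TensorProduct.map LinearMap.id (Q.Sinv ∘ₗ LinearMap.mulRight ℂ Q.betaEl) ∘ₗ
      (TensorProduct.comm ℂ G G).toLinearMap)
    LinearMap.id ∘ₗ (TensorProduct.assoc ℂ G G M).symm.toLinearMap

@[simp]
theorem alphaContract_tmul (a b : G) (c : M) :
    Q.alphaContract (a ⊗ₜ[ℂ] (b ⊗ₜ[ℂ] c)) = (Q.S a * Q.alphaEl * b) ⊗ₜ[ℂ] c := by
  simp [alphaContract]

@[simp]
theorem betaContract_tmul (a b : G) (c : M) :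
    Q.betaContract (a ⊗ₜ[ℂ] (b ⊗ₜ[ℂ] c)) = (b * Q.Sinv (a * Q.betaEl)) ⊗ₜ[ℂ] c := by
  simp [betaContract]

theorem alphaContract_mul_tmul_mul (a x : G) (v w : G ⊗[ℂ] M) :
    Q.alphaContract ((a * x) ⊗ₜ[ℂ] (v * w)) =
      (Q.S x ⊗ₜ[ℂ] (1 : M)) * Q.alphaContract (a ⊗ₜ[ℂ] v) * w := by
  induction v using TensorProduct.induction_on with
  | zero => simp
  | add v₁ v₂ h₁ h₂ => simp [add_mul, mul_add, tmul_add, h₁, h₂]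
  | tmul b c =>
    induction w using TensorProduct.induction_on with
    | zero => simp
    | add w₁ w₂ h₁ h₂ => simp [mul_add, tmul_add, h₁, h₂]
    | tmul y k => simp [Q.S_mul, mul_assoc]

theorem betaContract_tmul_mul_mul (a x : G) (v w : G ⊗[ℂ] M) :
    Q.betaContract ((x * a) ⊗ₜ[ℂ] (w * v)) =
      w * Q.betaContract (a ⊗ₜ[ℂ] v) * (Q.Sinv x ⊗ₜ[ℂ] (1 : M)) := by
  induction v using TensorProduct.induction_on with
  | zero => simp
  | add v₁ v₂ h₁ h₂ => simp [add_mul, mul_add, tmul_add, h₁, h₂]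
  | tmul b c =>
    induction w using TensorProduct.induction_on with
    | zero => simp
    | add w₁ w₂ h₁ h₂ => simp [add_mul, tmul_add, h₁, h₂]
    | tmul y k => simp [Sinv_mul, mul_assoc]

theorem alphaContract_assoc_tmul_mul (w : G ⊗[ℂ] G) (n : M) (a b : G) (c : M) :
    Q.alphaContract ((TensorProduct.assoc ℂ G G M) (w ⊗ₜ[ℂ] n) * (a ⊗ₜ[ℂ] (b ⊗ₜ[ℂ] c))) =
      (Q.S a *
          LinearMap.mul' ℂ G
            (TensorProduct.map (LinearMap.mulRight ℂ Q.alphaEl ∘ₗ Q.S) LinearMap.id w) *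
          b) ⊗ₜ[ℂ] (n * c) := by
  induction w using TensorProduct.induction_on with
  | zero => simp
  | add w₁ w₂ h₁ h₂ => simp only [map_add, add_tmul, add_mul, mul_add, h₁, h₂]
  | tmul x₁ x₂ => simp [Q.S_mul, mul_assoc]

theorem betaContract_mul_assoc_tmul (w : G ⊗[ℂ] G) (n : M) (a b : G) (c : M) :
    Q.betaContract ((a ⊗ₜ[ℂ] (b ⊗ₜ[ℂ] c)) * (TensorProduct.assoc ℂ G G M) (w ⊗ₜ[ℂ] n)) =
      (b * Q.Sinv (LinearMap.mul' ℂ G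
            (TensorProduct.map (LinearMap.mulRight ℂ Q.betaEl) Q.S w)) *
          Q.Sinv a) ⊗ₜ[ℂ] (c * n) := by
  induction w using TensorProduct.induction_on with
  | zero => simp
  | add w₁ w₂ h₁ h₂ => simp only [map_add, add_tmul, add_mul, mul_add, h₁, h₂]
  | tmul x₁ x₂ => simp [Sinv_mul, Q.Sinv_S, mul_assoc]

theorem alphaContract_comul_mul (z : G ⊗[ℂ] M) (u : G ⊗[ℂ] (G ⊗[ℂ] M)) :
    Q.alphaContract ((TensorProduct.assoc ℂ G G M)
        (TensorProduct.map Q.comul.toLinearMap LinearMap.id z) * u) =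
      ((1 : G) ⊗ₜ[ℂ] (TensorProduct.lid ℂ M)
        (TensorProduct.map Q.counit.toLinearMap LinearMap.id z)) * Q.alphaContract u := by
  induction z using TensorProduct.induction_on with
  | zero => simp
  | add z₁ z₂ h₁ h₂ => simp only [map_add, add_mul, h₁, h₂, tmul_add]
  | tmul x n =>
    simp only [map_tmul, AlgHom.toLinearMap_apply, LinearMap.id_coe, id_eq, lid_tmul]
    have key :
        Q.alphaContract ∘ₗ LinearMap.mulLeft ℂ (TensorProduct.assoc ℂ G G M (Q.comul x ⊗ₜ n)) =
          LinearMap.mulLeft ℂ ((1 : G) ⊗ₜ[ℂ] (Q.counit x • n)) ∘ₗ Q.alphaContract :=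
      TensorProduct.ext_threefold' fun a b c => by
        simp [alphaContract_assoc_tmul_mul, Q.antipode_left, smul_tmul']
    exact LinearMap.congr_fun key u

theorem betaContract_mul_comul (z : G ⊗[ℂ] M) (u : G ⊗[ℂ] (G ⊗[ℂ] M)) :
    Q.betaContract (u * (TensorProduct.assoc ℂ G G M)
        (TensorProduct.map Q.comul.toLinearMap LinearMap.id z)) =
      Q.betaContract u * ((1 : G) ⊗ₜ[ℂ] (TensorProduct.lid ℂ M)
        (TensorProduct.map Q.counit.toLinearMap LinearMap.id z)) := by
  induction z using TensorProduct.induction_on with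
  | zero => simp
  | add z₁ z₂ h₁ h₂ => simp only [map_add, mul_add, h₁, h₂, tmul_add]
  | tmul x n =>
    simp only [map_tmul, AlgHom.toLinearMap_apply, LinearMap.id_coe, id_eq, lid_tmul]
    have key :
        Q.betaContract ∘ₗ LinearMap.mulRight ℂ (TensorProduct.assoc ℂ G G M (Q.comul x ⊗ₜ n)) =
          LinearMap.mulRight ℂ ((1 : G) ⊗ₜ[ℂ] (Q.counit x • n)) ∘ₗ Q.betaContract :=
      TensorProduct.ext_threefold' fun a b c => by
        simp [betaContract_mul_assoc_tmul, Q.antipode_right, smul_tmul', Sinv_mul, mul_assoc]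
    exact LinearMap.congr_fun key u

end QuasiHopf

namespace LeftQCoaction

variable {Q : QuasiBialg G} (L : LeftQCoaction G M Q)

def phiLUnit : (G ⊗[ℂ] (G ⊗[ℂ] M))ˣ := ⟨L.phiL, L.phiLInv, L.phiL_mul_inv, L.phiL_inv_mul⟩

theorem phiLInv_mul_intertwine (m : M) :
    L.phiLInv * TensorProduct.map LinearMap.id L.lam.toLinearMap (L.lam m) =
      (TensorProduct.assoc ℂ G G M)
          (TensorProduct.map Q.comul.toLinearMap LinearMap.id (L.lam m)) * L.phiLInv :=
  SemiconjBy.units_inv_symm_left (a := L.phiLUnit) (L.intertwine m).symm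

end LeftQCoaction

section
variable (Q : QuasiHopf G) (L : LeftQCoaction G M Q.toQuasiBialg)

theorem thetaP_tmul (t : G ⊗[ℂ] M) (x : G) (n : M) :
    thetaP Q L t (x ⊗ₜ[ℂ] n) = L.lam n * t * (Q.Sinv x ⊗ₜ[ℂ] (1 : M)) := by
  simp [thetaP]

theorem thetaQ_tmul (t : G ⊗[ℂ] M) (x : G) (n : M) :
    thetaQ Q L t (x ⊗ₜ[ℂ] n) = (Q.S x ⊗ₜ[ℂ] (1 : M)) * t * L.lam n := by
  simp [thetaQ]

theorem pLam_eq_betaContract : pLam Q L = Q.betaContract L.phiL := rfl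

theorem qLam_eq_alphaContract : qLam Q L = Q.alphaContract L.phiLInv := rfl

theorem thetaP_betaContract (u : G ⊗[ℂ] (G ⊗[ℂ] M)) (z : G ⊗[ℂ] M) :
    thetaP Q L (Q.betaContract u) z =
      Q.betaContract (TensorProduct.map LinearMap.id L.lam.toLinearMap z * u) := by
  induction z using TensorProduct.induction_on with
  | zero => simp
  | add z₁ z₂ h₁ h₂ => simp [add_mul, h₁, h₂]
  | tmul x n =>
    rw [thetaP_tmul]
    induction u using TensorProduct.induction_on with
    | zero => simp
    | add u₁ u₂ h₁ h₂ => simp only [map_add, add_mul, mul_add, h₁, h₂]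
    | tmul a v => simp [Q.betaContract_tmul_mul_mul]

theorem thetaQ_alphaContract (u : G ⊗[ℂ] (G ⊗[ℂ] M)) (z : G ⊗[ℂ] M) :
    thetaQ Q L (Q.alphaContract u) z =
      Q.alphaContract (u * TensorProduct.map LinearMap.id L.lam.toLinearMap z) := by
  induction z using TensorProduct.induction_on with
  | zero => simp
  | add z₁ z₂ h₁ h₂ => simp [mul_add, h₁, h₂]
  | tmul x n =>
    rw [thetaQ_tmul]
    induction u using TensorProduct.induction_on with
    | zero => simp
    | add u₁ u₂ h₁ h₂ => simp only [map_add, add_mul, mul_add, h₁, h₂]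
    | tmul a v => simp [Q.alphaContract_mul_tmul_mul]

end

theorem statement15
    (Q : QuasiHopf G) (L : LeftQCoaction G M Q.toQuasiBialg) :
    (∀ m : M, thetaP Q L (pLam Q L) (L.lam m) = pLam Q L * ((1 : G) ⊗ₜ[ℂ] m)) ∧
    (∀ m : M, thetaQ Q L (qLam Q L) (L.lam m) = ((1 : G) ⊗ₜ[ℂ] m) * qLam Q L) := by
  refine ⟨fun m => ?_, fun m => ?_⟩
  · rw [pLam_eq_betaContract, thetaP_betaContract, L.intertwine m, Q.betaContract_mul_comul,
      L.counit_lam m]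
  · rw [qLam_eq_alphaContract, thetaQ_alphaContract, L.phiLInv_mul_intertwine m,
      Q.alphaContract_comul_mul, L.counit_lam m]
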